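/- For each natural number n, define V_n : ℝ \ {0} → ℝ by V_n(q) = q^(4n) + V(q)·P_n(q), where V(q) = −q⁹ + q⁷ − q⁵ + q³ + q + q⁻¹ + q⁻³ − q⁻⁵ + q⁻⁷ − q⁻⁹ and P_n(q) = ∑_{k=1}^{n} (q^(4k−3) − q^(4k−1)). Then the third (real) derivative of V_n at q = 1 equals V_n‴(1) = 576n. In particular, V_n‴(1) ≠ 0 for every n ≥ 1. -/

import Mathlib

/-- The Jones polynomial of the pretzel link `P(3,−2,2,−3)`. -/
noncomputable def pretzelV : ℝ → ℝ := fun q =>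
  -q ^ 9 + q ^ 7 - q ^ 5 + q ^ 3 + q + q⁻¹ + (q⁻¹) ^ 3 - (q⁻¹) ^ 5 + (q⁻¹) ^ 7 - (q⁻¹) ^ 9

/-- `Pₙ(q) = ∑_{k=1}^{n} (q^(4k−3) − q^(4k−1))`. -/
noncomputable def Pfun (n : ℕ) : ℝ → ℝ := fun q =>
  ∑ k ∈ Finset.Icc 1 n, (q ^ (4 * k - 3) - q ^ (4 * k - 1))

/-- The Jones polynomial of `KT_{2,n}`: `Vₙ(q) = q^(4n) + V(q)·Pₙ(q)`. -/
noncomputable def Vfun (n : ℕ) : ℝ → ℝ := fun q =>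
  q ^ (4 * n) + pretzelV q * Pfun n q


/-
Leibniz's rule at `q = 1` gives `Vₙ‴(1) = (q^(4n))‴(1) + Σᵢ C(3,i) V⁽ⁱ⁾(1) Pₙ⁽³⁻ⁱ⁾(1)`.
Since `Pₙ(1) = 0` and `V'(1) = 0` (`V` is palindromic), only `V(1) Pₙ‴(1) + 3 V''(1) Pₙ'(1)`
survives, with `V(1) = 2`, `V''(1) = -94`, `Pₙ'(1) = -2n` and
`Pₙ‴(1) = -6 Σₖ (4k-3)² = -2n(16n² - 12n - 1)`. The cubic and quadratic terms cancel against
`4n(4n-1)(4n-2)`, leaving `8n + 4n + 564n = 576n`.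
-/

open Finset

section LaurentMonomials

variable {𝕜 : Type*} [NontriviallyNormedField 𝕜]

theorem contDiffAt_zpow_of_ne_zero {m : ℤ} {x : 𝕜} (hx : x ≠ 0) {n : WithTop ℕ∞} :
    ContDiffAt 𝕜 n (fun y => y ^ m) x := by
  obtain ⟨k, rfl | rfl⟩ := Int.eq_nat_or_neg m
  · simp only [zpow_natCast]
    fun_prop
  · simp only [zpow_neg, zpow_natCast]
    fun_prop (disch := exact pow_ne_zero k hx)

theorem iteratedDeriv_zpow (m : ℤ) (k : ℕ) (x : 𝕜) :
    iteratedDeriv k (fun y => y ^ m) x = (∏ i ∈ range k, ((m : 𝕜) - i)) * x ^ (m - k) := by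
  rw [iteratedDeriv_eq_iterate, iter_deriv_zpow]

theorem iteratedDeriv_pow_eq_prod (m k : ℕ) (x : 𝕜) :
    iteratedDeriv k (fun y => y ^ m) x = (∏ i ∈ range k, ((m : 𝕜) - i)) * x ^ (m - k) := by
  rw [iteratedDeriv_eq_iterate, iter_deriv_pow]

theorem iteratedDeriv_sum_mul_zpow {ι : Type*} (s : Finset ι) (c : ι → 𝕜) (e : ι → ℤ) {x : 𝕜}
    (hx : x ≠ 0) (k : ℕ) :
    iteratedDeriv k (fun y => ∑ i ∈ s, c i * y ^ e i) x =
      ∑ i ∈ s, c i * ((∏ j ∈ range k, ((e i : 𝕜) - j)) * x ^ (e i - k)) := by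
  rw [iteratedDeriv_fun_sum fun i _ => contDiffAt_const.mul (contDiffAt_zpow_of_ne_zero hx)]
  simp only [iteratedDeriv_const_mul_field, iteratedDeriv_zpow]

end LaurentMonomials

theorem pretzelV_eq_sum_zpow :
    pretzelV = fun q => ∑ i : Fin 10, (![-1, 1, -1, 1, 1, 1, 1, -1, 1, -1] : Fin 10 → ℝ) i *
      q ^ (![9, 7, 5, 3, 1, -1, -3, -5, -7, -9] : Fin 10 → ℤ) i := by
  funext q
  simp only [pretzelV, inv_pow, Fin.sum_univ_succ, Fin.isValue, Matrix.cons_val_zero, zpow_ofNat,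
    neg_mul, one_mul, Matrix.cons_val_succ, pow_one, zpow_neg, univ_unique, Fin.default_eq_zero,
    Matrix.cons_val_fin_one, sum_neg_distrib, sum_const, card_singleton, one_smul]
  ring

theorem contDiffAt_pretzelV {x : ℝ} (hx : x ≠ 0) {n : WithTop ℕ∞} : ContDiffAt ℝ n pretzelV x := by
  unfold pretzelV
  fun_prop (disch := assumption)

theorem iteratedDeriv_pretzelV_one (k : ℕ) :
    iteratedDeriv k pretzelV 1 = ∑ i : Fin 10, (![-1, 1, -1, 1, 1, 1, 1, -1, 1, -1] : Fin 10 → ℝ) i *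
      ∏ j ∈ range k, (((![9, 7, 5, 3, 1, -1, -3, -5, -7, -9] : Fin 10 → ℤ) i : ℝ) - (j : ℝ)) := by
  rw [pretzelV_eq_sum_zpow, iteratedDeriv_sum_mul_zpow _ _ _ one_ne_zero]
  simp only [one_zpow, mul_one]

theorem pretzelV_one : pretzelV 1 = 2 := by
  norm_num [pretzelV]

theorem deriv_pretzelV_one : deriv pretzelV 1 = 0 := by
  simp [← iteratedDeriv_one, iteratedDeriv_pretzelV_one, Fin.sum_univ_succ]

theorem iteratedDeriv_two_pretzelV_one : iteratedDeriv 2 pretzelV 1 = -94 := by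
  norm_num [iteratedDeriv_pretzelV_one, Fin.sum_univ_succ, prod_range_succ]

theorem contDiff_Pfun (n : ℕ) {m : WithTop ℕ∞} : ContDiff ℝ m (Pfun n) := by
  unfold Pfun
  fun_prop

theorem iteratedDeriv_Pfun_one (n k : ℕ) :
    iteratedDeriv k (Pfun n) 1 = ∑ j ∈ Icc 1 n,
      (∏ i ∈ range k, (4 * (j : ℝ) - 3 - i) - ∏ i ∈ range k, (4 * (j : ℝ) - 1 - i)) := by
  unfold Pfun
  rw [iteratedDeriv_fun_sum fun j _ => by fun_prop]
  refine sum_congr rfl fun j hj => ?_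
  have hj : 1 ≤ j := (mem_Icc.mp hj).1
  rw [iteratedDeriv_fun_sub (by fun_prop) (by fun_prop), iteratedDeriv_pow_eq_prod,
    iteratedDeriv_pow_eq_prod]
  push_cast [Nat.cast_sub (by omega : 3 ≤ 4 * j), Nat.cast_sub (by omega : 1 ≤ 4 * j)]
  simp

theorem Pfun_one (n : ℕ) : Pfun n 1 = 0 := by
  simp [Pfun]

theorem deriv_Pfun_one (n : ℕ) : deriv (Pfun n) 1 = -2 * n := by
  rw [← iteratedDeriv_one, iteratedDeriv_Pfun_one]
  simp only [range_one, prod_singleton, CharP.cast_eq_zero, sub_zero, sub_sub_sub_cancel_left,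
    sum_sub_distrib, sum_const, Nat.card_Icc, add_tsub_cancel_right, nsmul_eq_mul, mul_one]
  ring

theorem iteratedDeriv_three_Pfun_one (n : ℕ) :
    iteratedDeriv 3 (Pfun n) 1 = -2 * n * (16 * n ^ 2 - 12 * n - 1) := by
  rw [iteratedDeriv_Pfun_one]
  induction n with
  | zero => simp
  | succ n ih =>
    rw [sum_Icc_succ_top (by omega), ih]
    simp only [prod_range_succ, prod_range_zero]
    push_cast
    ring

/-- `Vₙ‴(1) = 576n`, nonzero for `n ≥ 1`. -/
theorem Vfun_third_deriv_at_one (n : ℕ) :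
    iteratedDeriv 3 (Vfun n) 1 = 576 * n ∧
      (1 ≤ n → iteratedDeriv 3 (Vfun n) 1 ≠ 0) := by
  have hV : ContDiffAt ℝ 3 pretzelV 1 := contDiffAt_pretzelV one_ne_zero
  have hP : ContDiffAt ℝ 3 (Pfun n) 1 := (contDiff_Pfun n).contDiffAt
  have leibniz : iteratedDeriv 3 (fun q => pretzelV q * Pfun n q) 1 =
      pretzelV 1 * iteratedDeriv 3 (Pfun n) 1
        + 3 * deriv pretzelV 1 * iteratedDeriv 2 (Pfun n) 1
        + 3 * iteratedDeriv 2 pretzelV 1 * deriv (Pfun n) 1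
        + iteratedDeriv 3 pretzelV 1 * Pfun n 1 := by
    rw [iteratedDeriv_fun_mul hV hP]
    simp [sum_range_succ]
  have h576 : iteratedDeriv 3 (Vfun n) 1 = 576 * n := by
    unfold Vfun
    rw [iteratedDeriv_fun_add (by fun_prop) (hV.mul hP), leibniz, iteratedDeriv_pow_eq_prod,
      pretzelV_one, deriv_pretzelV_one, iteratedDeriv_two_pretzelV_one, Pfun_one,
      deriv_Pfun_one, iteratedDeriv_three_Pfun_one]
    simp only [prod_range_succ, prod_range_zero]
    push_cast
    ring
  refine ⟨h576, fun hn => h576 ▸ ?_⟩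
  exact mul_ne_zero (by norm_num) (by exact_mod_cast (by omega : n ≠ 0))
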